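/- One-step recursion for B-spline integrals: for every order k ≥ 1, every j ∈ ℤ and every x ∈ ℝ with x ≥ t_j, one has ∫_{t_j}^{x} B_{j,k}(u) du = ((t_{j+k} − t_j)/k) · B_{j,k+1}(x) + ((t_{j+k} − t_j)/(t_{j+k+1} − t_{j+1})) · ∫_{t_{j+1}}^{x} B_{j+1,k}(u) du. -/

import Mathlib

/-- B-splines of order `k ≥ 1` with knot sequence `t`, defined by the Cox–de Boor recursion:
`B_{j,1}(x) = 1` if `t j ≤ x < t (j+1)` and `0` otherwise; and for `k ≥ 2`,
`B_{j,k}(x) = ((x − t_j)/(t_{j+k−1} − t_j)) B_{j,k−1}(x)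
            + ((t_{j+k} − x)/(t_{j+k} − t_{j+1})) B_{j+1,k−1}(x)`.
(The value for order `0` is irrelevant and set to `0`.) -/
noncomputable def bspline (t : ℤ → ℝ) : ℕ → ℤ → ℝ → ℝ
  | 0, _, _ => 0
  | 1, j, x => if t j ≤ x ∧ x < t (j + 1) then 1 else 0
  | (k + 2), j, x =>
      ((x - t j) / (t (j + (k : ℤ) + 1) - t j)) * bspline t (k + 1) j x +
      ((t (j + (k : ℤ) + 2) - x) / (t (j + (k : ℤ) + 2) - t (j + 1))) *
        bspline t (k + 1) (j + 1) x

/-!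
Away from the knots, `B_{j,k+1}` is differentiable with derivative
`k (B_{j,k} / (t_{j+k} - t_j) - B_{j+1,k} / (t_{j+k+1} - t_{j+1}))`; this follows by induction
on `k` from the recursion, the induction step being an algebraic identity between these
difference quotients. Hence the right-hand side, as a function of `x`, is continuous, vanishes at
`t_j`, and has derivative `B_{j,k}` off the countable set of knots, so the fundamental theorem of
calculus gives the identity.
-/

open Set Filter Topology MeasureTheory

variable {t : ℤ → ℝ}

lemma bspline_add_two (t : ℤ → ℝ) (k : ℕ) (j : ℤ) :
    bspline t (k + 2) j =
      (fun x => (x - t j) / (t (j + k + 1) - t j)) * bspline t (k + 1) j +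
      (fun x => (t (j + k + 2) - x) / (t (j + k + 2) - t (j + 1))) * bspline t (k + 1) (j + 1) :=
  rfl

lemma measurable_bspline (t : ℤ → ℝ) : ∀ k j, Measurable (bspline t k j)
  | 0, _ => measurable_const
  | 1, _ => Measurable.ite measurableSet_Ico measurable_const measurable_const
  | k + 2, j => by
    have := measurable_bspline t (k + 1) j
    have := measurable_bspline t (k + 1) (j + 1)
    rw [bspline_add_two]
    fun_prop

lemma bspline_eq_zero_of_lt (ht : Monotone t) : ∀ {k : ℕ} {j : ℤ} {x : ℝ}, x < t j →
    bspline t k j x = 0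
  | 0, _, _, _ => rfl
  | 1, _, _, hx => by simp [bspline, hx.not_ge]
  | k + 2, j, x, hx => by
    have hx' : x < t (j + 1) := hx.trans_le (ht (by omega))
    simp [bspline, bspline_eq_zero_of_lt ht hx, bspline_eq_zero_of_lt ht hx']

lemma bspline_add_two_apply_self (ht : StrictMono t) (k : ℕ) (j : ℤ) :
    bspline t (k + 2) j (t j) = 0 := by
  simp [bspline, bspline_eq_zero_of_lt ht.monotone (ht (lt_add_one j))]

lemma integral_bspline_eq_zero_of_le (ht : Monotone t) (k : ℕ) (j : ℤ) {a b : ℝ}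
    (ha : a ≤ t j) (hb : b ≤ t j) : ∫ u in a..b, bspline t k j u = 0 := by
  refine intervalIntegral.integral_zero_ae ?_
  filter_upwards [(countable_singleton (t j)).ae_notMem volume] with u hu hab
  exact bspline_eq_zero_of_lt ht ((hab.2.trans (max_le ha hb)).lt_of_ne hu)

lemma bspline_two_eq (ht : StrictMono t) (j : ℤ) (x : ℝ) :
    bspline t 2 j x =
      max 0 (min ((x - t j) / (t (j + 1) - t j)) ((t (j + 2) - x) / (t (j + 2) - t (j + 1)))) := by
  have h₁ : 0 < t (j + 1) - t j := sub_pos.2 (ht (by omega))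
  have h₂ : 0 < t (j + 2) - t (j + 1) := sub_pos.2 (ht (by omega))
  simp only [bspline, add_zero, CharP.cast_eq_zero]
  rw [show j + 1 + 1 = j + 2 by ring]
  have hA : (x - t j) / (t (j + 1) - t j) - 1 = (x - t (j + 1)) / (t (j + 1) - t j) := by
    field_simp; ring
  have hB : 1 - (t (j + 2) - x) / (t (j + 2) - t (j + 1)) =
      (x - t (j + 1)) / (t (j + 2) - t (j + 1)) := by
    field_simp; ring
  set A := (x - t j) / (t (j + 1) - t j)
  set B := (t (j + 2) - x) / (t (j + 2) - t (j + 1))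
  rcases lt_or_ge x (t (j + 1)) with hx | hx
  · have hAB : A ≤ B := by
      have := div_nonpos_of_nonpos_of_nonneg (sub_nonpos.2 hx.le) h₁.le
      have := div_nonpos_of_nonpos_of_nonneg (sub_nonpos.2 hx.le) h₂.le
      linarith
    rw [min_eq_left hAB]
    rcases lt_or_ge x (t j) with hx' | hx'
    · have : A < 0 := div_neg_of_neg_of_pos (by linarith) h₁
      simp [hx'.not_ge, hx.not_ge, max_eq_left this.le]
    · have : 0 ≤ A := div_nonneg (sub_nonneg.2 hx') h₁.le
      simp [hx', hx, hx.not_ge, this]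
  · have hBA : B ≤ A := by
      have := div_nonneg (sub_nonneg.2 hx) h₁.le
      have := div_nonneg (sub_nonneg.2 hx) h₂.le
      linarith
    rw [min_eq_right hBA]
    rcases lt_or_ge x (t (j + 2)) with hx' | hx'
    · have : 0 ≤ B := div_nonneg (sub_nonneg.2 hx'.le) h₂.le
      simp [hx', hx, hx.not_gt, this]
    · have : B ≤ 0 := div_nonpos_of_nonpos_of_nonneg (by linarith) h₂.le
      simp [hx'.not_gt, hx.not_gt, max_eq_left this]

lemma continuous_bspline (ht : StrictMono t) : ∀ k j, Continuous (bspline t (k + 2) j)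
  | 0, j => by
    rw [funext (bspline_two_eq ht j)]
    fun_prop
  | k + 1, j => by
    have := continuous_bspline ht k j
    have := continuous_bspline ht k (j + 1)
    rw [bspline_add_two]
    fun_prop

lemma intervalIntegrable_bspline (ht : StrictMono t) :
    ∀ k j (a b : ℝ), IntervalIntegrable (bspline t k j) volume a b
  | 0, _, _, _ => intervalIntegrable_const
  | 1, j, _, _ => by
    refine (intervalIntegrable_const (c := (1 : ℝ))).mono_fun
      (measurable_bspline t 1 j).aestronglyMeasurable (ae_of_all _ fun x => ?_)
    simp only [bspline]
    split_ifs <;> norm_num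
  | k + 2, j, a, b => (continuous_bspline ht k j).intervalIntegrable a b

lemma eventually_le_iff_of_ne {α : Type*} [TopologicalSpace α] [LinearOrder α]
    [OrderClosedTopology α] {a u : α} (h : u ≠ a) : ∀ᶠ v in 𝓝 u, (a ≤ v ↔ a ≤ u) := by
  rcases h.lt_or_gt with h | h
  · filter_upwards [eventually_lt_nhds h] with v hv
    exact iff_of_false hv.not_ge h.not_ge
  · filter_upwards [eventually_gt_nhds h] with v hv
    exact iff_of_true hv.le h.le

lemma bspline_one_eventuallyEq (j : ℤ) {u : ℝ} (hu : u ∉ range t) :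
    bspline t 1 j =ᶠ[𝓝 u] fun _ => bspline t 1 j u := by
  filter_upwards [eventually_le_iff_of_ne fun h => hu ⟨j, h.symm⟩,
    eventually_le_iff_of_ne fun h => hu ⟨j + 1, h.symm⟩] with v h₁ h₂
  simp only [bspline, ← not_le, h₁, h₂]

noncomputable def bsplineDiff (t : ℤ → ℝ) (k : ℕ) (j : ℤ) (x : ℝ) : ℝ :=
  bspline t k j x / (t (j + k) - t j) - bspline t k (j + 1) x / (t (j + k + 1) - t (j + 1))

lemma bsplineDiff_add_two (ht : Function.Injective t) (k : ℕ) (j : ℤ) (x : ℝ) :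
    (x - t j) / (t (j + k + 2) - t j) * bsplineDiff t (k + 1) j x +
      (t (j + k + 3) - x) / (t (j + k + 3) - t (j + 1)) * bsplineDiff t (k + 1) (j + 1) x =
    bsplineDiff t (k + 2) j x := by
  -- after unfolding, the coefficients of `B_{j+1,k+1}` on the two sides differ by
  -- `(1 - 1) / (t_{j+k+2} - t_{j+1})`
  have h₁ : t (j + k + 2) - t j ≠ 0 := sub_ne_zero.2 (ht.ne (by omega))
  have h₂ : t (j + k + 3) - t (j + 1) ≠ 0 := sub_ne_zero.2 (ht.ne (by omega))
  simp only [bsplineDiff, bspline]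
  push_cast
  simp only [← add_assoc]
  rw [show j + 1 + k + 1 = j + k + 2 by ring, show j + k + 1 + 1 = j + k + 2 by ring,
    show j + k + 2 + 1 = j + k + 3 by ring, show j + 1 + k + 2 = j + k + 3 by ring]
  field_simp
  ring

lemma hasDerivAt_bspline (ht : Function.Injective t) :
    ∀ (k : ℕ) (j : ℤ) {u : ℝ}, u ∉ range t →
      HasDerivAt (bspline t (k + 1) j) (k * bsplineDiff t k j u) u
  | 0, j, u, hu => by
    simpa using (hasDerivAt_const u _).congr_of_eventuallyEq (bspline_one_eventuallyEq j hu)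
  | k + 1, j, u, hu => by
    have hw₁ : HasDerivAt (fun v => (v - t j) / (t (j + k + 1) - t j))
        (1 / (t (j + k + 1) - t j)) u := ((hasDerivAt_id u).sub_const _).div_const _
    have hw₂ : HasDerivAt (fun v => (t (j + k + 2) - v) / (t (j + k + 2) - t (j + 1)))
        (-1 / (t (j + k + 2) - t (j + 1))) u := by
      simpa using ((hasDerivAt_const u _).sub (hasDerivAt_id u)).div_const _
    have hB := (hw₁.mul (hasDerivAt_bspline ht k j hu)).add
      (hw₂.mul (hasDerivAt_bspline ht k (j + 1) hu))
    have hweights : (k : ℝ) * ((u - t j) / (t (j + k + 1) - t j) * bsplineDiff t k j u +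
        (t (j + k + 2) - u) / (t (j + k + 2) - t (j + 1)) * bsplineDiff t k (j + 1) u) =
        k * bsplineDiff t (k + 1) j u := by
      rcases k with _ | m
      · simp
      · rw [← bsplineDiff_add_two ht]
        push_cast
        ring_nf
    have hdiff : bsplineDiff t (k + 1) j u = bspline t (k + 1) j u / (t (j + k + 1) - t j) -
        bspline t (k + 1) (j + 1) u / (t (j + k + 2) - t (j + 1)) := by
      simp only [bsplineDiff]
      push_cast
      ring_nf
    rw [bspline_add_two]
    refine hB.congr_deriv ?_
    push_cast
    linear_combination hweights - hdiff

/-- One-step recursion for B-spline integrals: for every order `k ≥ 1` and `x ≥ t j`,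
`∫_{t_j}^{x} B_{j,k}(u) du = ((t_{j+k} − t_j)/k) B_{j,k+1}(x)
 + ((t_{j+k} − t_j)/(t_{j+k+1} − t_{j+1})) ∫_{t_{j+1}}^{x} B_{j+1,k}(u) du`. -/
theorem bspline_integral_recursion (t : ℤ → ℝ) (ht : StrictMono t) (k : ℕ) (hk : 1 ≤ k)
    (j : ℤ) (x : ℝ) (hx : t j ≤ x) :
    ∫ u in (t j)..x, bspline t k j u =
      ((t (j + (k : ℤ)) - t j) / (k : ℝ)) * bspline t (k + 1) j x +
      ((t (j + (k : ℤ)) - t j) / (t (j + (k : ℤ) + 1) - t (j + 1))) *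
        ∫ u in (t (j + 1))..x, bspline t k (j + 1) u := by
  obtain ⟨m, rfl⟩ : ∃ m, k = m + 1 := ⟨k - 1, by omega⟩
  set F : ℝ → ℝ := fun y => ((t (j + (m + 1 : ℕ)) - t j) / (m + 1 : ℕ)) * bspline t (m + 2) j y +
    ((t (j + (m + 1 : ℕ)) - t j) / (t (j + (m + 1 : ℕ) + 1) - t (j + 1))) *
      ∫ u in (t (j + 1))..y, bspline t (m + 1) (j + 1) u
  have hF₀ : F (t j) = 0 := by
    simp [F, bspline_add_two_apply_self ht,
      integral_bspline_eq_zero_of_le ht.monotone _ _ le_rfl (ht (lt_add_one j)).le]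
  have hFc : Continuous F := by
    have := continuous_bspline ht m j
    have := intervalIntegral.continuous_primitive (intervalIntegrable_bspline ht (m + 1) (j + 1))
      (t (j + 1))
    fun_prop
  have hF' : ∀ u ∉ range t, HasDerivAt F (bspline t (m + 1) j u) u := by
    intro u hu
    have hB := hasDerivAt_bspline ht.injective (m + 1) j hu
    have hI := intervalIntegral.integral_hasDerivAt_right
      (intervalIntegrable_bspline ht (m + 1) (j + 1) (t (j + 1)) u)
      (measurable_bspline t (m + 1) (j + 1)).aestronglyMeasurable.stronglyMeasurableAtFilter
      (hasDerivAt_bspline ht.injective m (j + 1) hu).continuousAt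
    refine ((hB.const_mul _).add (hI.const_mul _)).congr_deriv ?_
    have hΔ : t (j + (m + 1 : ℕ)) - t j ≠ 0 := sub_ne_zero.2 (ht.injective.ne (by omega))
    simp only [bsplineDiff]
    field_simp
    ring
  rw [integral_eq_of_hasDerivAt_off_countable_of_le F _ hx (countable_range t) hFc.continuousOn
    (fun u hu => hF' u hu.2) (intervalIntegrable_bspline ht _ _ _ _), hF₀, sub_zero]
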